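/- arXiv:1303.5502 — 3 statements merged into one kernel-verified Lean document; each statement's English description precedes it below -/
import Mathlib

section
/- The minimal class of languages over the one-letter alphabet {1} that contains every singleton language {1^n} (n ∈ ℕ) and is closed under concatenation and Kleene star equals the class {L((x_1,...,x_m),a) : (x_1,...,x_m) ∈ ℕ*, a ∈ ℕ}. -/
open Computability

/-- The unary language `L((x_1,…,x_m), a) = {1^n : n = c_1·x_1 + … + c_m·x_m + a}`. -/
def unaryL (xs : List ℕ) (a : ℕ) : Language Unit :=
  {w | ∃ c : Fin xs.length → ℕ,
    w = List.replicate ((∑ i, c i * xs.get i) + a) ()}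

/-- The minimal class of languages over `{1}` containing every singleton `{1^n}`
and closed under concatenation and Kleene star. -/
inductive L0 : Language Unit → Prop
  | single (n : ℕ) : L0 {List.replicate n ()}
  | mul {l m : Language Unit} : L0 l → L0 m → L0 (l * m)
  | star {l : Language Unit} : L0 l → L0 (l∗)

/-!
A language over `{1}` is determined by its set of word lengths; under this correspondence
concatenation becomes the sumset `S + T` and the Kleene star becomes the additive submonoid
generated by `S`. Hence every language of `L0` has length set a translate `M + {a}` of an additive
submonoid `M ≤ ℕ`: the star of `M + {a}` is a submonoid, i.e. the translate by `0`. Every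
submonoid of `ℕ` is finitely generated, so these are exactly the sets `L((x₁,…,xₘ), a)`.
Conversely `L((x₁,…,xₘ), a) = {1^x₁}∗ ⋯ {1^xₘ}∗ {1^a}`.
-/

open scoped Pointwise

def lengthLang (S : Set ℕ) : Language Unit := {w | w.length ∈ S}

theorem List.eq_of_length_eq_unit {u v : List Unit} (h : u.length = v.length) : u = v :=
  List.ext_getElem h fun _ _ _ => rfl

@[simp]
theorem mem_lengthLang {S : Set ℕ} {w : List Unit} : w ∈ lengthLang S ↔ w.length ∈ S :=
  Iff.rfl

theorem lengthLang_singleton (n : ℕ) : lengthLang {n} = {List.replicate n ()} := by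
  ext w
  show w.length = n ↔ w = List.replicate n ()
  exact ⟨fun h => List.eq_of_length_eq_unit (by simpa), fun h => by simp [h]⟩

theorem lengthLang_add (S T : Set ℕ) : lengthLang (S + T) = lengthLang S * lengthLang T := by
  ext w
  simp only [mem_lengthLang, Set.mem_add, Language.mem_mul]
  constructor
  · rintro ⟨s, hs, t, ht, hw⟩
    exact ⟨List.replicate s (), by simpa, List.replicate t (), by simpa,
      List.eq_of_length_eq_unit (by simpa)⟩
  · rintro ⟨u, hu, v, hv, rfl⟩
    exact ⟨u.length, hu, v.length, hv, List.length_append.symm⟩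

theorem lengthLang_closure (S : Set ℕ) :
    lengthLang (AddSubmonoid.closure S) = (lengthLang S)∗ := by
  ext w
  simp only [mem_lengthLang, SetLike.mem_coe, Language.mem_kstar]
  constructor
  · intro hw
    obtain ⟨ns, hns, hsum⟩ := AddSubmonoid.exists_list_of_mem_closure hw
    refine ⟨ns.map (List.replicate · ()), List.eq_of_length_eq_unit ?_, by simpa using hns⟩
    simp [List.length_flatten, hsum, Function.comp_def]
  · rintro ⟨L, rfl, hL⟩
    rw [List.length_flatten]
    refine AddSubmonoid.list_sum_mem _ fun n hn => ?_
    obtain ⟨u, hu, rfl⟩ := List.mem_map.1 hn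
    exact AddSubmonoid.subset_closure (hL u hu)

theorem unaryL_eq_lengthLang (xs : List ℕ) (a : ℕ) :
    unaryL xs a = lengthLang (AddSubmonoid.closure {x | x ∈ xs} + {a}) := by
  ext w
  rw [mem_lengthLang, Set.add_singleton, ← Set.range_list_get]
  simp only [Set.mem_image, SetLike.mem_coe, AddSubmonoid.mem_closure_range_iff_of_fintype]
  constructor
  · rintro ⟨c, rfl⟩
    exact ⟨_, ⟨c, rfl⟩, by simp⟩
  · rintro ⟨_, ⟨c, rfl⟩, hw⟩
    exact ⟨c, List.eq_of_length_eq_unit (by simp [← hw])⟩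

theorem L0.exists_lengthLang_eq {l : Language Unit} (hl : L0 l) :
    ∃ (M : AddSubmonoid ℕ) (a : ℕ), l = lengthLang (M + {a}) := by
  induction hl with
  | single n => exact ⟨⊥, n, by simp [lengthLang_singleton]⟩
  | mul _ _ ihl ihm =>
    obtain ⟨M, a, rfl⟩ := ihl
    obtain ⟨N, b, rfl⟩ := ihm
    refine ⟨M ⊔ N, a + b, ?_⟩
    rw [← lengthLang_add, AddSubmonoid.coe_sup, add_add_add_comm, Set.singleton_add_singleton]
  | star _ ih =>
    obtain ⟨M, a, rfl⟩ := ih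
    exact ⟨AddSubmonoid.closure (M + {a}), 0, by simp [lengthLang_closure]⟩

theorem L0_lengthLang_closure_add (xs : List ℕ) (a : ℕ) :
    L0 (lengthLang (AddSubmonoid.closure {x | x ∈ xs} + {a})) := by
  induction xs with
  | nil => simpa [lengthLang_singleton] using L0.single a
  | cons x xs ih =>
    have hcons : {y | y ∈ x :: xs} = {x} ∪ {y | y ∈ xs} := by ext; simp
    rw [hcons, AddSubmonoid.closure_union, AddSubmonoid.coe_sup, add_assoc, lengthLang_add,
      lengthLang_closure, lengthLang_singleton]
    exact (L0.single x).star.mul ih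

theorem exists_unaryL_eq_lengthLang (M : AddSubmonoid ℕ) (a : ℕ) :
    ∃ xs, unaryL xs a = lengthLang (M + {a}) := by
  obtain ⟨s, rfl⟩ := Nat.addSubmonoid_fg M
  exact ⟨s.toList, by simp [unaryL_eq_lengthLang]⟩

theorem L0_eq_unaryL :
    {l : Language Unit | L0 l} =
      {l : Language Unit | ∃ (xs : List ℕ) (a : ℕ), l = unaryL xs a} := by
  ext l
  constructor
  · intro hl
    obtain ⟨M, a, rfl⟩ := L0.exists_lengthLang_eq hl
    obtain ⟨xs, hxs⟩ := exists_unaryL_eq_lengthLang M a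
    exact ⟨xs, a, hxs.symm⟩
  · rintro ⟨xs, a, rfl⟩
    rw [unaryL_eq_lengthLang]
    exact L0_lengthLang_closure_add xs a
end

section
/- The minimal class of languages over {1} containing all {1^n} and closed under concatenation and Kleene star coincides with the minimal class of languages over {1} containing all {1^n} and all ({1^n})^* (for n ∈ ℕ) and closed only under concatenation. -/
open Computability

/-- The minimal class of languages over `{1}` containing every `{1^n}` and every
`{1^n}∗` and closed only under concatenation. -/
inductive L0' : Language Unit → Prop
  | single (n : ℕ) : L0' {List.replicate n ()}
  | singleStar (n : ℕ) : L0' ({List.replicate n ()}∗)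
  | mul {l m : Language Unit} : L0' l → L0' m → L0' (l * m)

attribute [local instance] Classical.propDecidable


-- lengths of words in a unary language
def lens (l : Language Unit) : Set ℕ := {n | List.replicate n () ∈ l}

lemma unit_word (w : List Unit) : w = List.replicate w.length () :=
  (List.eq_replicate_length.mpr (fun b _ => rfl))

lemma mem_iff_lens {l : Language Unit} {w : List Unit} : w ∈ l ↔ w.length ∈ lens l := by
  constructor
  · intro h; unfold lens; simpa [← unit_word w] using h
  · intro h; have := h; unfold lens at this
    rw [unit_word w]; exact this

lemma lens_inj {l m : Language Unit} (h : lens l = lens m) : l = m := by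
  ext w; rw [mem_iff_lens, mem_iff_lens, h]

lemma lens_mul (l m : Language Unit) : lens (l * m) = {n | ∃ a ∈ lens l, ∃ b ∈ lens m, a + b = n} := by
  ext n
  simp only [lens, Set.mem_setOf_eq, Language.mem_mul]
  constructor
  · rintro ⟨a, ha, b, hb, hab⟩
    refine ⟨a.length, mem_iff_lens.mp ha, b.length, mem_iff_lens.mp hb, ?_⟩
    have := congrArg List.length hab
    simpa using this
  · rintro ⟨a, ha, b, hb, rfl⟩
    exact ⟨List.replicate a (), ha, List.replicate b (), hb, (List.replicate_add a b ()).symm⟩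

lemma repl_flatten (L : List ℕ) :
    List.replicate L.sum () = (L.map (fun k => List.replicate k ())).flatten := by
  induction L with
  | nil => simp
  | cons a L ih =>
    simp only [List.map_cons, List.flatten_cons, List.sum_cons]
    rw [List.replicate_add]; congr 1

lemma lens_kstar (l : Language Unit) : lens (l∗) = (AddSubmonoid.closure (lens l) : Set ℕ) := by
  ext n
  simp only [lens, Set.mem_setOf_eq, Language.mem_kstar, SetLike.mem_coe]
  constructor
  · rintro ⟨L, hL, hmem⟩
    have : n = (L.map List.length).sum := by
      have := congrArg List.length hL; simpa using this
    rw [this]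
    refine list_sum_mem ?_
    intro x hx
    simp only [List.mem_map] at hx
    obtain ⟨y, hy, rfl⟩ := hx
    exact AddSubmonoid.subset_closure (mem_iff_lens.mp (hmem y hy))
  · intro h
    obtain ⟨L, hL, rfl⟩ := AddSubmonoid.exists_list_of_mem_closure h
    refine ⟨L.map (fun k => List.replicate k ()), ?_, ?_⟩
    · exact repl_flatten L
    · intro y hy
      simp only [List.mem_map] at hy
      obtain ⟨k, hk, rfl⟩ := hy
      exact hL k hk

/-- Every additive submonoid of ℕ is generated by a finite list. -/
lemma nat_submonoid_fg (M : AddSubmonoid ℕ) :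
    ∃ gs : List ℕ, M = AddSubmonoid.closure {x | x ∈ gs} := by
  by_cases htriv : ∀ x ∈ M, x = 0
  · refine ⟨[], ?_⟩
    have : AddSubmonoid.closure ({x | x ∈ ([] : List ℕ)}) = ⊥ := by
      convert AddSubmonoid.closure_empty
      simp
    rw [this]
    ext x
    simp only [AddSubmonoid.mem_bot]
    exact ⟨fun hx => htriv x hx, fun hx => hx ▸ M.zero_mem⟩
  · push_neg at htriv
    obtain ⟨a, haM, ha0⟩ := htriv
    refine ⟨a :: ((List.range a).filterMap (fun r =>
      if h : ∃ x, x ∈ M ∧ x % a = r then some (Nat.find h) else none)), ?_⟩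
    apply le_antisymm
    · intro m hm
      have hex : ∃ x, x ∈ M ∧ x % a = m % a := ⟨m, hm, rfl⟩
      set w := Nat.find hex with hw
      obtain ⟨hwM, hwmod⟩ := Nat.find_spec hex
      have hwle : w ≤ m := Nat.find_min' hex ⟨hm, rfl⟩
      have hdvd : a ∣ m - w := by
        have := Nat.sub_mod_eq_zero_of_mod_eq hwmod.symm
        exact Nat.dvd_of_mod_eq_zero this
      obtain ⟨k, hk⟩ := hdvd
      have hmeq : m = w + k • a := by
        simp only [smul_eq_mul]
        rw [mul_comm] at hk
        omega
      rw [hmeq]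
      apply add_mem
      · apply AddSubmonoid.subset_closure
        simp only [Set.mem_setOf_eq, List.mem_cons, List.mem_filterMap]
        right
        refine ⟨m % a, List.mem_range.mpr (Nat.mod_lt _ (Nat.pos_of_ne_zero ha0)), ?_⟩
        rw [dif_pos hex]
      · exact nsmul_mem (AddSubmonoid.subset_closure (by simp)) k
    · rw [AddSubmonoid.closure_le]
      intro x hx
      simp only [Set.mem_setOf_eq, List.mem_cons, List.mem_filterMap] at hx
      rcases hx with rfl | ⟨r, _, hr⟩
      · exact haM
      · by_cases h : ∃ y, y ∈ M ∧ y % a = r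
        · rw [dif_pos h] at hr
          cases hr
          exact (Nat.find_spec h).1
        · rw [dif_neg h] at hr
          cases hr

/-- product of stars of singletons -/
def prodStar : List ℕ → Language Unit
  | [] => 1
  | g :: gs => ({List.replicate g ()} : Language Unit)∗ * prodStar gs

lemma lens_single (n : ℕ) : lens ({List.replicate n ()} : Language Unit) = {n} := by
  ext k
  simp only [lens, Set.mem_setOf_eq, Set.mem_singleton_iff]
  constructor
  · intro h
    have := congrArg List.length h; simpa using this
  · rintro rfl; rfl

lemma lens_prodStar (gs : List ℕ) :
    lens (prodStar gs) = (AddSubmonoid.closure {x | x ∈ gs} : Set ℕ) := by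
  induction gs with
  | nil =>
    have h1 : lens (prodStar []) = {0} := by
      ext k
      simp only [prodStar, lens, Language.one_def, Set.mem_setOf_eq, Set.mem_singleton_iff]
      constructor
      · intro h; simpa using congrArg List.length h
      · rintro rfl; rfl
    rw [h1]
    have : ({x | x ∈ ([] : List ℕ)} : Set ℕ) = ∅ := by simp
    rw [this, AddSubmonoid.closure_empty]
    ext x; simp [AddSubmonoid.mem_bot, eq_comm]
  | cons g gs ih =>
    show lens (({List.replicate g ()} : Language Unit)∗ * prodStar gs) = _
    rw [lens_mul, lens_kstar, ih, lens_single]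
    have hset : ({x | x ∈ g :: gs} : Set ℕ) = {g} ∪ {x | x ∈ gs} := by
      ext x; simp
    rw [hset, AddSubmonoid.closure_union]
    ext n
    simp only [Set.mem_setOf_eq, SetLike.mem_coe, AddSubmonoid.mem_sup]

lemma L0'_prodStar (gs : List ℕ) : L0' (prodStar gs) := by
  induction gs with
  | nil =>
    have : prodStar [] = {List.replicate 0 ()} := by
      show (1 : Language Unit) = _
      rw [Language.one_def]; rfl
    rw [this]; exact L0'.single 0
  | cons g gs ih => exact L0'.mul (L0'.singleStar g) ih

lemma L0'_kstar (l : Language Unit) : L0' (l∗) := by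
  obtain ⟨gs, hgs⟩ := nat_submonoid_fg (AddSubmonoid.closure (lens l))
  have : l∗ = prodStar gs := by
    apply lens_inj
    rw [lens_kstar, lens_prodStar, ← hgs]
  rw [this]
  exact L0'_prodStar gs

theorem L0_eq_L0' : {l : Language Unit | L0 l} = {l : Language Unit | L0' l} := by
  ext l
  simp only [Set.mem_setOf_eq]
  constructor
  · intro h
    induction h with
    | single n => exact L0'.single n
    | mul hl hm ihl ihm => exact L0'.mul ihl ihm
    | star hl ihl => exact L0'_kstar _
  · intro h
    induction h with
    | single n => exact L0.single n
    | singleStar n => exact L0.star (L0.single n)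
    | mul hl hm ihl ihm => exact L0.mul ihl ihm
end

section
/- Every set S in D_0 (the minimal class of subsets of ℕ containing singletons and closed under sumset and additive Kleene star) has the form S = {a_1·n_1 + ... + a_k·n_k + a : n_1,...,n_k ∈ ℕ} for some a_1,...,a_k, a ∈ ℕ. -/
open Pointwise

/-- The additive Kleene star `S* = {s_1 + … + s_k : k ≥ 0, s_i ∈ S}`. -/
def addStar (S : Set ℕ) : Set ℕ :=
  {n | ∃ l : List ℕ, (∀ x ∈ l, x ∈ S) ∧ l.sum = n}

/-- `D0`: the minimal class of subsets of `ℕ` containing all singletons and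
closed under sumset and additive Kleene star. -/
inductive D0 : Set ℕ → Prop
  | single (b : ℕ) : D0 {b}
  | add {S T : Set ℕ} : D0 S → D0 T → D0 (S + T)
  | star {S : Set ℕ} : D0 S → D0 (addStar S)

/-! A set of the required form is a linear set `a +ᵥ P` with `P` a finitely generated submonoid
of `ℕ`. Singletons are linear and sumsets of linear sets are linear. `S*` is the submonoid
generated by `S`, and every submonoid of `ℕ` is finitely generated, so `S*` is linear for any
`S` whatsoever. -/

theorem addStar_eq_closure (S : Set ℕ) : addStar S = AddSubmonoid.closure S := by
  rw [AddSubmonoid.closure_eq_image_sum]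
  rfl

theorem D0.isLinearSet {S : Set ℕ} (hS : D0 S) : IsLinearSet S := by
  induction hS with
  | single b => exact .singleton b
  | add _ _ ihS ihT => exact ihS.add ihT
  | star => rw [addStar_eq_closure]; exact .of_fg (Nat.addSubmonoid_fg _)

theorem IsLinearSet.eq_setOf_sum_mul_add {S : Set ℕ} (hS : IsLinearSet S) :
    ∃ (k : ℕ) (av : Fin k → ℕ) (a : ℕ),
      S = {n | ∃ m : Fin k → ℕ, n = (∑ i, av i * m i) + a} := by
  obtain ⟨a, k, f, rfl⟩ := isLinearSet_iff_exists_fin_addMonoidHom.mp hS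
  obtain ⟨av, hf⟩ : ∃ av : Fin k → ℕ, ⇑f = fun m => ∑ i, av i * m i := by
    refine ⟨fun i => f (Pi.single i 1), funext fun m => ?_⟩
    calc f m = f (∑ i, m i • Pi.single i 1) := by
          congr 1; ext j; simp [Pi.single_apply]
      _ = ∑ i, f (Pi.single i 1) * m i := by
          simp only [map_sum, map_nsmul, smul_eq_mul, mul_comm]
  refine ⟨k, av, a, Set.ext fun n => ?_⟩
  simp only [hf, Set.mem_vadd_set, Set.mem_range, exists_exists_eq_and, vadd_eq_add,
    Set.mem_ofPred_eq]
  exact exists_congr fun m => by omega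

theorem D0_linear_form (S : Set ℕ) (hS : D0 S) :
    ∃ (k : ℕ) (av : Fin k → ℕ) (a : ℕ),
      S = {n | ∃ m : Fin k → ℕ, n = (∑ i, av i * m i) + a} :=
  hS.isLinearSet.eq_setOf_sum_mul_add
end
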